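/- Fix N ∈ ℕ, Π > 0, and a real constant I. Define γ_φ(u,ε) = ((N+2)/72)(1 - ε/4 + Iε) Π² u² - ((N+2)(N+8)/432)(I+1) Π³ u³ and u*(ε) = (6ε/((N+8)Π))(1 + ε(3(3N+14)/(N+8)² + 1/2)). Then γ_φ(u*(ε), ε) = ((N+2)ε²/(2(N+8)²))·(1 + ε(6(3N+14)/(N+8)² - 1/4)) + O(ε⁴) as ε → 0. In particular, the result is independent of Π and of I through order ε³. -/

import Mathlib

/-!
Both `γ_φ` and `u*` are explicit, so `γ_φ(u*(ε), ε) - η(ε)` is a rational function of `ε` which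
turns out to be `ε⁴` times a quadratic polynomial in `ε`. The `Π`-dependence drops out because
`u* ∝ 1/Π` while the `k`-th power of `u` in `γ_φ` comes with `Πᵏ`; the `I`-dependence cancels at
order `ε³` between the `I ε u²` term and the `I u³` term.
-/

noncomputable section EpsilonExpansion

variable (n Pi I : ℝ)

def anomalousDim (u ε : ℝ) : ℝ :=
  ((n + 2) / 72) * (1 - ε / 4 + I * ε) * Pi ^ 2 * u ^ 2 -
    ((n + 2) * (n + 8) / 432) * (I + 1) * Pi ^ 3 * u ^ 3

def fixedPoint (ε : ℝ) : ℝ :=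
  6 * ε / ((n + 8) * Pi) * (1 + ε * (3 * (3 * n + 14) / (n + 8) ^ 2 + 1 / 2))

def etaExpansion (ε : ℝ) : ℝ :=
  ((n + 2) * ε ^ 2 / (2 * (n + 8) ^ 2)) * (1 + ε * (6 * (3 * n + 14) / (n + 8) ^ 2 - 1 / 4))

theorem anomalousDim_fixedPoint_sub_etaExpansion (hn : n + 8 ≠ 0) (hPi : Pi ≠ 0) :
    ∃ a b c : ℝ, ∀ ε : ℝ,
      anomalousDim n Pi I (fixedPoint n Pi ε) ε - etaExpansion n ε =
        ε ^ 4 * (a + b * ε + c * ε ^ 2) := by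
  set s : ℝ := 3 * (3 * n + 14) / (n + 8) ^ 2 + 1 / 2 with hs
  set K : ℝ := (n + 2) / (2 * (n + 8) ^ 2) with hK
  refine ⟨K * (s ^ 2 - I * s - 7 / 2 * s), K * (-2 * I - 13 / 4) * s ^ 2,
    -K * (I + 1) * s ^ 3, fun ε => ?_⟩
  have hη : 6 * (3 * n + 14) / (n + 8) ^ 2 - 1 / 4 = 2 * s - 5 / 4 := by
    rw [hs]; field_simp; ring
  rw [anomalousDim, fixedPoint, etaExpansion, ← hs, hη, hK]
  field_simp
  ring

end EpsilonExpansion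

theorem abs_add_mul_add_mul_sq_le {a b c ε : ℝ} (hε : |ε| ≤ 1) :
    |a + b * ε + c * ε ^ 2| ≤ |a| + |b| + |c| := by
  have hb : |b * ε| ≤ |b| := by
    rw [abs_mul]; exact mul_le_of_le_one_right (abs_nonneg b) hε
  have hc : |c * ε ^ 2| ≤ |c| := by
    rw [abs_mul, abs_pow]
    exact mul_le_of_le_one_right (abs_nonneg c) (pow_le_one₀ (abs_nonneg ε) hε)
  calc |a + b * ε + c * ε ^ 2| ≤ |a| + |b * ε| + |c * ε ^ 2| := abs_add_three _ _ _
    _ ≤ |a| + |b| + |c| := by gcongr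

theorem exists_abs_le_mul_pow_four_of_eq {f : ℝ → ℝ} {a b c : ℝ}
    (hf : ∀ ε, f ε = ε ^ 4 * (a + b * ε + c * ε ^ 2)) :
    ∃ C δ : ℝ, 0 < C ∧ 0 < δ ∧ ∀ ε : ℝ, 0 < ε → ε < δ → |f ε| ≤ C * ε ^ 4 := by
  refine ⟨|a| + |b| + |c| + 1, 1, by positivity, one_pos, fun ε hε hε1 => ?_⟩
  have hε' : |ε| ≤ 1 := by rw [abs_of_pos hε]; exact hε1.le
  rw [hf, abs_mul, abs_pow, abs_of_pos hε, mul_comm]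
  gcongr
  linarith [abs_add_mul_add_mul_sq_le (a := a) (b := b) (c := c) hε']

/-- η = γ_φ(u*) equals its Lorentz-invariant ε-expansion up to O(ε⁴). -/
theorem stmt8 (N : ℕ) (Pi I : ℝ) (hPi : 0 < Pi) :
    ∃ C δ : ℝ, 0 < C ∧ 0 < δ ∧ ∀ ε : ℝ, 0 < ε → ε < δ →
      |(fun u e : ℝ =>
            ((N + 2 : ℝ) / 72) * (1 - e / 4 + I * e) * Pi ^ 2 * u ^ 2 -
              ((N + 2 : ℝ) * (N + 8 : ℝ) / 432) * (I + 1) * Pi ^ 3 * u ^ 3)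
          (6 * ε / ((N + 8 : ℝ) * Pi) *
            (1 + ε * (3 * (3 * N + 14 : ℝ) / (N + 8 : ℝ) ^ 2 + 1 / 2))) ε -
        ((N + 2 : ℝ) * ε ^ 2 / (2 * (N + 8 : ℝ) ^ 2)) *
          (1 + ε * (6 * (3 * N + 14 : ℝ) / (N + 8 : ℝ) ^ 2 - 1 / 4))| ≤ C * ε ^ 4 := by
  obtain ⟨a, b, c, h⟩ :=
    anomalousDim_fixedPoint_sub_etaExpansion N Pi I (by positivity) hPi.ne'
  exact exists_abs_le_mul_pow_four_of_eq h
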